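/- Let A : ℓ¹(ℕ) → Y and x† ∈ ℓ¹(ℕ) satisfy Assumption (source condition): for each n, a family M_n of index sets of cardinality n containing {1,…,n}, such that for each sign sequence ξ supported in some M ∈ M_n there is η ∈ Y* with ‖η‖ ≤ γ_n, P_{supp ξ}A*η = ξ, and ‖(I−P_{supp ξ})A*η‖_∞ ≤ c for fixed c ∈ [0,1). Then with β = (1−c)/(1+c) and φ(t) = 2 inf_n ( inf_{M∈M_n} ‖(I−P_M)x†‖₁ + γ_n t/(1+c) ), the variational inequality β‖x − x†‖₁ ≤ ‖x‖₁ − ‖x†‖₁ + φ(‖Ax − Ax†‖_Y) holds for all x ∈ ℓ¹(ℕ). -/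

import Mathlib

noncomputable section

abbrev L1 : Type := lp (fun _ : ℕ => ℝ) 1

def e (k : ℕ) : L1 := lp.single 1 k 1

def norm1On (M : Set ℕ) (x : L1) : ℝ :=
  ∑' k, M.indicator (fun k => |(x : ℕ → ℝ) k|) k

/-- A sign sequence supported in the index set `M`. -/
def SignIn (ξ : ℕ → ℝ) (M : Finset ℕ) : Prop :=
  (∀ k, ξ k = -1 ∨ ξ k = 0 ∨ ξ k = 1) ∧ ∀ k ∉ M, ξ k = 0

/-!
Fix `M ∈ 𝓜 n` and put `u = x - x†`. Feeding the sign sequence of `u` on `M` into the source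
condition yields `η` for which `f = η ∘ A` equals `sign u` on `M` and has modulus at most `c`
off `M`. Expanding `f u = ∑ u_k f(e_k)`, with `a = ‖P_M u‖₁` and `b = ‖(I - P_M) u‖₁` this gives
`a ≤ f u + c b ≤ γ_n ‖A x - A x†‖ + c b`. The triangle inequality on `M` and on its complement
gives `‖x‖₁ - ‖x†‖₁ ≥ b - a - 2 ‖(I - P_M) x†‖₁`, and `β` is exactly the constant for which
`β (a + b) = (b - a) + 2 (a - c b) / (1 + c)`. Taking infima over `M` and `n` concludes.
-/

namespace L1

theorem summable_abs (x : L1) : Summable fun k => |(x : ℕ → ℝ) k| := by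
  simpa [Real.norm_eq_abs] using (lp.memℓp x).summable (p := 1) one_pos

theorem norm_eq_tsum_abs (x : L1) : ‖x‖ = ∑' k, |(x : ℕ → ℝ) k| := by
  simpa [Real.norm_eq_abs] using lp.norm_eq_tsum_rpow (p := 1) one_pos x

theorem single_eq_smul_e (k : ℕ) (a : ℝ) : lp.single 1 k a = a • e k := by
  rw [e, ← lp.single_smul, smul_eq_mul, mul_one]

theorem hasSum_mul_apply_e (f : L1 →L[ℝ] ℝ) (x : L1) :
    HasSum (fun k => (x : ℕ → ℝ) k * f (e k)) (f x) := by
  have : Fact ((1 : ENNReal) ≤ 1) := ⟨le_rfl⟩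
  simpa [single_eq_smul_e] using f.hasSum (lp.hasSum_single ENNReal.one_ne_top x)

end L1

section norm1On

variable (S : Set ℕ) (x y : L1)

theorem summable_indicator_abs : Summable (S.indicator fun k => |(x : ℕ → ℝ) k|) :=
  (L1.summable_abs x).indicator S

theorem norm1On_add_norm1On_compl : norm1On S x + norm1On Sᶜ x = ‖x‖ := by
  rw [norm1On, norm1On, ← (summable_indicator_abs S x).tsum_add (summable_indicator_abs Sᶜ x),
    L1.norm_eq_tsum_abs]
  exact tsum_congr fun k => Set.indicator_self_add_compl_apply S _ k

theorem norm1On_neg : norm1On S (-x) = norm1On S x := by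
  simp [norm1On]

theorem norm1On_add_le : norm1On S (x + y) ≤ norm1On S x + norm1On S y := by
  rw [norm1On, norm1On, norm1On,
    ← (summable_indicator_abs S x).tsum_add (summable_indicator_abs S y)]
  refine (summable_indicator_abs S _).tsum_le_tsum (fun k => ?_)
    ((summable_indicator_abs S x).add (summable_indicator_abs S y))
  by_cases hk : k ∈ S
  · simpa [hk] using abs_add_le _ _
  · simp [hk]

theorem norm1On_compl_sub_le_norm_sub_norm :
    norm1On Sᶜ (x - y) - norm1On S (x - y) - 2 * norm1On Sᶜ y ≤ ‖x‖ - ‖y‖ := by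
  have hS := norm1On_add_le S x (y - x)
  have hSc := norm1On_add_le Sᶜ x (-y)
  rw [add_sub_cancel, ← norm1On_neg S (y - x), neg_sub] at hS
  rw [← sub_eq_add_neg, norm1On_neg] at hSc
  linarith [norm1On_add_norm1On_compl S x, norm1On_add_norm1On_compl S y]

end norm1On

theorem norm1On_le_apply_add_mul_norm1On_compl (S : Set ℕ) (x : L1) (f : L1 →L[ℝ] ℝ) {c : ℝ}
    (hS : ∀ k ∈ S, (x : ℕ → ℝ) k * f (e k) = |(x : ℕ → ℝ) k|)
    (hSc : ∀ k ∉ S, |f (e k)| ≤ c) :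
    norm1On S x ≤ f x + c * norm1On Sᶜ x := by
  set g : ℕ → ℝ := fun k => (x : ℕ → ℝ) k * f (e k)
  have hg : Summable g := (L1.hasSum_mul_apply_e f x).summable
  have hsplit : f x = ∑' k, S.indicator g k + ∑' k, Sᶜ.indicator g k := by
    rw [← (L1.hasSum_mul_apply_e f x).tsum_eq, ← (hg.indicator S).tsum_add (hg.indicator Sᶜ)]
    exact tsum_congr fun k => (Set.indicator_self_add_compl_apply S g k).symm
  have hon : ∑' k, S.indicator g k = norm1On S x :=
    congrArg tsum (Set.indicator_congr hS)
  have hoff : -(c * norm1On Sᶜ x) ≤ ∑' k, Sᶜ.indicator g k := by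
    rw [norm1On, ← tsum_mul_left, ← tsum_neg]
    refine ((summable_indicator_abs Sᶜ x).mul_left c).neg.tsum_le_tsum (fun k => ?_)
      (hg.indicator Sᶜ)
    by_cases hk : k ∈ S
    · simp [hk]
    · have : |g k| ≤ c * |(x : ℕ → ℝ) k| := by
        rw [abs_mul, mul_comm c]
        exact mul_le_mul_of_nonneg_left (hSc k hk) (abs_nonneg _)
      simpa [hk] using (neg_le_neg this).trans (neg_abs_le (g k))
  linarith

theorem variational_inequality_of_certificate (S : Set ℕ) (x y : L1) (f : L1 →L[ℝ] ℝ) {c : ℝ}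
    (hc : 0 ≤ c) (hS : ∀ k ∈ S, (⇑(x - y) : ℕ → ℝ) k * f (e k) = |(⇑(x - y) : ℕ → ℝ) k|)
    (hSc : ∀ k ∉ S, |f (e k)| ≤ c) :
    (1 - c) / (1 + c) * ‖x - y‖ ≤ ‖x‖ - ‖y‖ + 2 * (norm1On Sᶜ y + f (x - y) / (1 + c)) := by
  set a := norm1On S (x - y)
  set b := norm1On Sᶜ (x - y)
  have hcert : a ≤ f (x - y) + c * b := norm1On_le_apply_add_mul_norm1On_compl S _ f hS hSc
  have hsplit : (1 - c) / (1 + c) * ‖x - y‖ = b - a + 2 * ((a - c * b) / (1 + c)) := by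
    rw [← norm1On_add_norm1On_compl S (x - y)]
    field_simp
    ring
  have hmain : (a - c * b) / (1 + c) ≤ f (x - y) / (1 + c) := by
    gcongr
    linarith
  linarith [norm1On_compl_sub_le_norm_sub_norm S x y]

theorem signIn_indicator_sign (u : ℕ → ℝ) (M : Finset ℕ) :
    SignIn ((M : Set ℕ).indicator fun k => (SignType.sign (u k) : ℝ)) M := by
  refine ⟨fun k => ?_, fun k hk => Set.indicator_of_notMem (by simpa using hk) _⟩
  by_cases hk : k ∈ (M : Set ℕ)
  · rw [Set.indicator_of_mem hk]
    rcases SignType.sign (u k) with _ | _ | _ <;> simp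
  · simp [Set.indicator_of_notMem hk]

theorem variational_inequality_of_source {Y : Type*} [NormedAddCommGroup Y] [NormedSpace ℝ Y]
    (A : L1 →L[ℝ] Y) (x y : L1) (M : Finset ℕ) {c γ : ℝ} (hc : 0 ≤ c)
    (hsource : ∀ ξ : ℕ → ℝ, SignIn ξ M →
      ∃ η : StrongDual ℝ Y, ‖η‖ ≤ γ ∧
        (∀ k, ξ k ≠ 0 → η (A (e k)) = ξ k) ∧
        (∀ k, ξ k = 0 → |η (A (e k))| ≤ c)) :
    (1 - c) / (1 + c) * ‖x - y‖ ≤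
      ‖x‖ - ‖y‖ + 2 * (norm1On (M : Set ℕ)ᶜ y + γ * ‖A x - A y‖ / (1 + c)) := by
  set u : ℕ → ℝ := ⇑(x - y)
  obtain ⟨η, hη, hsign, hsmall⟩ := hsource _ (signIn_indicator_sign u M)
  have hS : ∀ k ∈ (M : Set ℕ), u k * η.comp A (e k) = |u k| := by
    intro k hk
    by_cases hu : u k = 0
    · simp [hu]
    have hξ : (M : Set ℕ).indicator (fun k => (SignType.sign (u k) : ℝ)) k ≠ 0 := by
      rcases lt_or_gt_of_ne hu with h | h <;> simp [Set.indicator_of_mem hk, h]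
    rw [ContinuousLinearMap.comp_apply, hsign k hξ, Set.indicator_of_mem hk, self_mul_sign]
  have hSc : ∀ k ∉ (M : Set ℕ), |η.comp A (e k)| ≤ c :=
    fun k hk => hsmall k (Set.indicator_of_notMem hk _)
  have hηA : η.comp A (x - y) ≤ γ * ‖A x - A y‖ :=
    calc η (A (x - y)) ≤ ‖η‖ * ‖A (x - y)‖ := (le_abs_self _).trans (η.le_opNorm _)
      _ ≤ γ * ‖A x - A y‖ := by rw [map_sub]; gcongr
  have hc1 : 0 < 1 + c := by linarith
  linarith [variational_inequality_of_certificate (M : Set ℕ) x y (η.comp A) hc hS hSc,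
    div_le_div_of_nonneg_right hηA hc1.le]

theorem stmt13_general {Y : Type*} [NormedAddCommGroup Y] [NormedSpace ℝ Y]
    (A : L1 →L[ℝ] Y) (xdag : L1)
    (𝓜 : ℕ → Set (Finset ℕ))
    (hrange : ∀ n, Finset.range n ∈ 𝓜 n)
    (c : ℝ) (hc0 : 0 ≤ c)
    (γ : ℕ → ℝ)
    (hsource : ∀ n, ∀ M ∈ 𝓜 n, ∀ ξ : ℕ → ℝ, SignIn ξ M →
      ∃ η : StrongDual ℝ Y, ‖η‖ ≤ γ n ∧
        (∀ k, ξ k ≠ 0 → η (A (e k)) = ξ k) ∧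
        (∀ k, ξ k = 0 → |η (A (e k))| ≤ c)) :
    ∀ x : L1, ((1 - c) / (1 + c)) * ‖x - xdag‖ ≤ ‖x‖ - ‖xdag‖ +
      (⨅ n : ℕ, 2 * ((⨅ M : 𝓜 n, norm1On (↑(M : Finset ℕ))ᶜ xdag) +
        γ n * ‖A x - A xdag‖ / (1 + c))) := by
  intro x
  rw [← sub_le_iff_le_add']
  refine le_ciInf fun n => ?_
  have : Nonempty (𝓜 n) := ⟨⟨_, hrange n⟩⟩
  have hM : ∀ M : 𝓜 n, ((1 - c) / (1 + c) * ‖x - xdag‖ - (‖x‖ - ‖xdag‖)) / 2 -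
      γ n * ‖A x - A xdag‖ / (1 + c) ≤ norm1On (↑(M : Finset ℕ))ᶜ xdag := fun M => by
    linarith [variational_inequality_of_source A x xdag M hc0 (hsource n M M.2)]
  linarith [le_ciInf hM]

/-- Main theorem: under the unified source condition, the variational inequality
`β ‖x - x†‖₁ ≤ ‖x‖₁ - ‖x†‖₁ + φ(‖Ax - Ax†‖)` holds with `β = (1-c)/(1+c)` and
`φ(t) = 2 inf_n ( inf_{M ∈ 𝓜 n} ‖(I-P_M)x†‖₁ + γ n · t/(1+c) )`. -/
theorem stmt13 {Y : Type*} [NormedAddCommGroup Y] [NormedSpace ℝ Y]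
    (A : L1 →L[ℝ] Y) (xdag : L1)
    (𝓜 : ℕ → Set (Finset ℕ))
    (hcard : ∀ n, ∀ M ∈ 𝓜 n, M.card = n)
    (hrange : ∀ n, Finset.range n ∈ 𝓜 n)
    (c : ℝ) (hc0 : 0 ≤ c) (hc1 : c < 1)
    (γ : ℕ → ℝ) (hγpos : ∀ n, 0 < γ n)
    (hsource : ∀ n, ∀ M ∈ 𝓜 n, ∀ ξ : ℕ → ℝ, SignIn ξ M →
      ∃ η : StrongDual ℝ Y, ‖η‖ ≤ γ n ∧
        (∀ k, ξ k ≠ 0 → η (A (e k)) = ξ k) ∧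
        (∀ k, ξ k = 0 → |η (A (e k))| ≤ c)) :
    ∀ x : L1, ((1 - c) / (1 + c)) * ‖x - xdag‖ ≤ ‖x‖ - ‖xdag‖ +
      (⨅ n : ℕ, 2 * ((⨅ M : 𝓜 n, norm1On (↑(M : Finset ℕ))ᶜ xdag) +
        γ n * ‖A x - A xdag‖ / (1 + c))) :=
  stmt13_general A xdag 𝓜 hrange c hc0 γ hsource
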